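/- arXiv:1709.03023 — 4 statements merged into one kernel-verified Lean document; each statement's English description precedes it below -/
import Mathlib

section
/- Let 𝔤 be a split simple subalgebra of a Lie algebra L over F and suppose L is (Γ,𝔤)-pregraded. Then the following are equivalent: (1) L is (Γ,𝔤)-graded; (2) L_0 = Σ_{α,−α∈Γ∖{0}} [L_α, L_{−α}]; (3) L = ⨁_{α∈Γ∖{0}} L_α + Σ_{α,−α∈Γ∖{0}} [L_α, L_{−α}]; (4) ≪𝔤≫ = L. -/
/-!
Let `M` be the sum of the nonzero weight spaces `L_α` (`α ∈ Γ ∖ {0}`) and of the brackets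
`[L_α, L_{-α}]`. The bracket of two weight vectors that are not both of weight zero lies in `M`,
because weights outside `Γ` have zero weight space; with the Jacobi identity this makes `M` an
ideal. It contains `𝔤`: a simple `𝔤` is perfect, and its zero weight part lies in the Cartan
subalgebra `𝔥`, so it brackets trivially with itself. Conversely `M ⊆ ≪𝔤≫`, as
`x = α(h)⁻¹ [h, x]` for `x ∈ L_α` and `h ∈ 𝔥`. Hence `≪𝔤≫ = M`, which gives (3) ⇔ (4); and since
`L_0` is independent of the nonzero weight spaces, `L = M` exactly when `L_0 = Σ [L_α, L_{-α}]`.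
-/

namespace WG

variable (F : Type*) [Field F]
variable (L : Type*) [LieRing L] [LieAlgebra F L]

/-- The `α`-weight space of the `H`-module `L`:
`{x ∈ L | [h, x] = α(h) • x for all h ∈ H}`. -/
def wt (H : LieSubalgebra F L) (α : Module.Dual F H) : Submodule F L where
  carrier := {x | ∀ h : H, ⁅(h : L), x⁆ = α h • x}
  add_mem' := by
    intro a b ha hb h
    rw [lie_add, ha h, hb h, smul_add]
  zero_mem' := by
    intro h
    rw [lie_zero, smul_zero]
  smul_mem' := by
    intro c x hx h
    rw [lie_smul, hx h]
    exact smul_comm c _ x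

/-- The linear span of all brackets `⁅m, n⁆` with `m ∈ M`, `n ∈ N`. -/
def bracketSpan (M N : Submodule F L) : Submodule F L :=
  Submodule.span F {z | ∃ m ∈ M, ∃ n ∈ N, z = ⁅m, n⁆}

/-- `H` is a Cartan subalgebra of the subalgebra `g`: it is a nilpotent subalgebra of `g`
which is self-normalizing in `g`. -/
def IsCartanIn (g H : LieSubalgebra F L) : Prop :=
  H ≤ g ∧ LieRing.IsNilpotent H ∧
    ∀ x ∈ g, (∀ h ∈ H, ⁅x, h⁆ ∈ H) → x ∈ H

/-- The set of roots of `g` relative to `H` (nonzero weights of the `H`-module `g`). -/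
def rootSet (g H : LieSubalgebra F L) : Set (Module.Dual F H) :=
  {α | α ≠ 0 ∧ wt F L H α ⊓ g.toSubmodule ≠ ⊥}

/-- `H` is a splitting Cartan subalgebra of `g`: `g` is the sum of its `H`-weight spaces. -/
def IsSplitIn (g H : LieSubalgebra F L) : Prop :=
  IsCartanIn F L g H ∧
    g.toSubmodule = ⨆ α : Module.Dual F H, (wt F L H α ⊓ g.toSubmodule)

/-- The Lie subalgebra `N` of `L` is `(Γ, g)`-pregraded relative to the
Cartan subalgebra `H` of `g`: conditions (Γ1) and (Γ2). -/
def IsPregraded (N g H : LieSubalgebra F L) (Γ : Set (Module.Dual F H)) : Prop :=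
  g ≤ N ∧ IsCartanIn F L g H ∧ Γ.Finite ∧ (0 : Module.Dual F H) ∈ Γ ∧
    rootSet F L g H ⊆ Γ ∧
    N.toSubmodule = ⨆ α ∈ Γ, (wt F L H α ⊓ N.toSubmodule)

/-- `Σ_{α, -α ∈ Γ \ {0}} ⁅N_α, N_{-α}⁆`. -/
def zeroPart (N H : LieSubalgebra F L) (Γ : Set (Module.Dual F H)) : Submodule F L :=
  ⨆ α ∈ {α ∈ Γ | α ≠ 0 ∧ -α ∈ Γ},
    bracketSpan F L (wt F L H α ⊓ N.toSubmodule) (wt F L H (-α) ⊓ N.toSubmodule)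

/-- The Lie subalgebra `N` of `L` is `(Γ, g)`-graded: conditions (Γ1), (Γ2) and (Γ3). -/
def IsGraded (N g H : LieSubalgebra F L) (Γ : Set (Module.Dual F H)) : Prop :=
  IsPregraded F L N g H Γ ∧
    wt F L H 0 ⊓ N.toSubmodule = zeroPart F L N H Γ

/-- The set of weights of the `H`-module `L`. -/
def weightSet (H : LieSubalgebra F L) : Set (Module.Dual F H) :=
  {α | wt F L H α ≠ ⊥}

attribute [local instance 100] LieRing.ofAssociativeRing

/-- `sl_m(F)` realized as the trace-zero `m × m` matrices. -/
def slL (m : ℕ) : LieSubalgebra F (Matrix (Fin m) (Fin m) F) where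
  carrier := {x | Matrix.trace x = 0}
  add_mem' := by
    intro a b ha hb
    simp only [Set.mem_setOf_eq] at *
    simp [Matrix.trace_add, ha, hb]
  zero_mem' := by simp
  smul_mem' := by
    intro c x hx
    simp only [Set.mem_setOf_eq] at *
    simp [Matrix.trace_smul, hx]
  lie_mem' := by
    intro x y hx hy
    simp only [Set.mem_setOf_eq] at *
    rw [Ring.lie_def]
    simp [Matrix.trace_sub, Matrix.trace_mul_comm x y]

end WG

namespace WG

variable {F L : Type*} [Field F] [LieRing L] [LieAlgebra F L] {H : LieSubalgebra F L}
  {Γ : Set (Module.Dual F H)}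

lemma lie_mem_wt_add {α β : Module.Dual F H} {x y : L} (hx : x ∈ wt F L H α)
    (hy : y ∈ wt F L H β) : ⁅x, y⁆ ∈ wt F L H (α + β) := by
  intro h
  rw [leibniz_lie, hx h, hy h, lie_smul, smul_lie, LinearMap.add_apply, add_smul]

lemma wt_eq_weightSpace (α : Module.Dual F H) :
    wt F L H α = (LieModule.weightSpace L (α : H → F)).toSubmodule := by
  ext x
  simp [LieModule.mem_weightSpace, wt]

lemma iSupIndep_wt [LieRing.IsNilpotent H] : iSupIndep (wt F L H) := by
  have h := LieSubmodule.iSupIndep_toSubmodule.mpr (LieModule.iSupIndep_genWeightSpace F H L)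
  refine (h.comp DFunLike.coe_injective).mono fun α => ?_
  rw [wt_eq_weightSpace, Function.comp_apply, LieSubmodule.toSubmodule_le_toSubmodule]
  exact LieModule.weightSpace_le_genWeightSpace L _

lemma wt_eq_bot_of_notMem [LieRing.IsNilpotent H] (hdec : (⨆ α ∈ Γ, wt F L H α) = ⊤)
    {γ : Module.Dual F H} (hγ : γ ∉ Γ) : wt F L H γ = ⊥ := by
  simpa [hdec] using iSupIndep_wt.disjoint_biSup hγ

lemma wt_zero_inf_le {g : LieSubalgebra F L}
    (hnorm : ∀ x ∈ g, (∀ h ∈ H, ⁅x, h⁆ ∈ H) → x ∈ H) :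
    wt F L H 0 ⊓ g.toSubmodule ≤ H.toSubmodule := by
  rintro x ⟨hx0, hxg⟩
  refine hnorm x hxg fun h hh => ?_
  have hhx : ⁅h, x⁆ = 0 := by simpa using hx0 ⟨h, hh⟩
  rw [← lie_skew, hhx, neg_zero]
  exact H.zero_mem

lemma mem_lieSpan_of_mem_wt {g : LieSubalgebra F L} (hHg : H ≤ g) {α : Module.Dual F H}
    (hα : α ≠ 0) {x : L} (hx : x ∈ wt F L H α) : x ∈ LieSubmodule.lieSpan F L (g : Set L) := by
  obtain ⟨h, hh⟩ : ∃ h : H, α h ≠ 0 := by simpa [DFunLike.ext_iff] using hα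
  have hxh : x = (α h)⁻¹ • ⁅(h : L), x⁆ := by rw [hx h, smul_smul, inv_mul_cancel₀ hh, one_smul]
  rw [hxh]
  exact Submodule.smul_mem _ _ (lie_mem_left F L _ _ _
    (LieSubmodule.subset_lieSpan (hHg h.2)))

lemma bracketSpan_eq_map₂ (M N : Submodule F L) :
    bracketSpan F L M N =
      Submodule.map₂ (LinearMap.mk₂ F (fun x y : L => ⁅x, y⁆) add_lie smul_lie lie_add lie_smul)
        M N := by
  rw [Submodule.map₂_eq_span_image2, bracketSpan]
  congr 1
  ext z
  simp [Set.mem_image2, eq_comm]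

lemma le_bracketSpan_self (g : LieSubalgebra F L) [LieAlgebra.IsSimple F g] :
    g.toSubmodule ≤ bracketSpan F L g.toSubmodule g.toSubmodule := by
  have hperf : ⁅(⊤ : LieIdeal F g), (⊤ : LieIdeal F g)⁆ = ⊤ :=
    lie_eq_self_of_isAtom_of_nonabelian ⊤ (LieAlgebra.IsSimple.isAtom_top F g)
      ((lie_abelian_iff_equiv_lie_abelian LieIdeal.topEquiv).not.mpr
        (LieAlgebra.IsSimple.non_abelian F))
  intro x hx
  have hx' : (⟨x, hx⟩ : g) ∈ (⁅(⊤ : LieIdeal F g), (⊤ : LieIdeal F g)⁆).toSubmodule := by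
    rw [hperf]; trivial
  rw [LieSubmodule.lieIdeal_oper_eq_linear_span'] at hx'
  refine Submodule.span_le (p := (bracketSpan F L g.toSubmodule g.toSubmodule).comap
    g.incl.toLinearMap) |>.mpr ?_ hx'
  rintro _ ⟨a, -, b, -, rfl⟩
  exact Submodule.subset_span ⟨a, a.2, b, b.2, rfl⟩

def nonzeroPart (H : LieSubalgebra F L) (Γ : Set (Module.Dual F H)) : Submodule F L :=
  ⨆ α ∈ Γ \ {0}, wt F L H α

lemma zeroPart_top :
    zeroPart F L ⊤ H Γ = ⨆ α ∈ {α ∈ Γ | α ≠ 0 ∧ -α ∈ Γ},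
      bracketSpan F L (wt F L H α) (wt F L H (-α)) := by
  simp [zeroPart]

lemma zeroPart_le_wt_zero (N : LieSubalgebra F L) :
    zeroPart F L N H Γ ≤ wt F L H 0 := by
  refine iSup₂_le fun α _ => ?_
  rw [bracketSpan_eq_map₂, Submodule.map₂_le]
  intro x hx y hy
  simpa using lie_mem_wt_add hx.1 hy.1

lemma zeroPart_le_lieSpan {g : LieSubalgebra F L} (hHg : H ≤ g) (N : LieSubalgebra F L) :
    zeroPart F L N H Γ ≤ (LieSubmodule.lieSpan F L (g : Set L)).toSubmodule := by
  refine iSup₂_le fun α hα => ?_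
  rw [bracketSpan_eq_map₂, Submodule.map₂_le]
  intro x hx y _
  exact lie_mem_left F L _ _ _ (mem_lieSpan_of_mem_wt hHg hα.2.1 hx.1)

lemma nonzeroPart_le_lieSpan {g : LieSubalgebra F L} (hHg : H ≤ g) :
    nonzeroPart H Γ ≤ (LieSubmodule.lieSpan F L (g : Set L)).toSubmodule :=
  iSup₂_le fun _ hα _ => mem_lieSpan_of_mem_wt hHg hα.2

lemma lie_mem_nonzeroPart_sup_zeroPart (hΓ : ∀ γ ∉ Γ, wt F L H γ = ⊥)
    {α β : Module.Dual F H} {x y : L} (hx : x ∈ wt F L H α) (hy : y ∈ wt F L H β)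
    (hαβ : α ≠ 0 ∨ β ≠ 0) :
    ⁅x, y⁆ ∈ nonzeroPart H Γ ⊔ zeroPart F L ⊤ H Γ := by
  have hxy := lie_mem_wt_add hx hy
  by_cases hsum : α + β = 0
  · obtain rfl : β = -α := eq_neg_of_add_eq_zero_right hsum
    have hα : α ≠ 0 := hαβ.elim id neg_ne_zero.mp
    by_cases hΓα : α ∈ Γ ∧ -α ∈ Γ
    · refine Submodule.mem_sup_right ?_
      rw [zeroPart_top]
      exact Submodule.mem_iSup_of_mem α (Submodule.mem_iSup_of_mem ⟨hΓα.1, hα, hΓα.2⟩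
        (Submodule.subset_span ⟨x, hx, y, hy, rfl⟩))
    · rcases not_and_or.mp hΓα with h | h
      · simp [show x = 0 by simpa [hΓ α h] using hx]
      · simp [show y = 0 by simpa [hΓ _ h] using hy]
  · by_cases hΓsum : α + β ∈ Γ
    · exact Submodule.mem_sup_left (Submodule.mem_iSup_of_mem (α + β)
        (Submodule.mem_iSup_of_mem ⟨hΓsum, hsum⟩ hxy))
    · simp [show ⁅x, y⁆ = 0 by simpa [hΓ _ hΓsum] using hxy]

lemma lie_mem_nonzeroPart_sup_zeroPart_of_mem (hΓ : ∀ γ ∉ Γ, wt F L H γ = ⊥)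
    (hdec : (⨆ β ∈ Γ, wt F L H β) = ⊤) (x : L) {m : L}
    (hm : m ∈ nonzeroPart H Γ ⊔ zeroPart F L ⊤ H Γ) :
    ⁅x, m⁆ ∈ nonzeroPart H Γ ⊔ zeroPart F L ⊤ H Γ := by
  set B := LinearMap.mk₂ F (fun x y : L => ⁅x, y⁆) add_lie smul_lie lie_add lie_smul
  suffices Submodule.map₂ B ⊤ (nonzeroPart H Γ ⊔ zeroPart F L ⊤ H Γ) ≤
      nonzeroPart H Γ ⊔ zeroPart F L ⊤ H Γ from
    Submodule.map₂_le.mp this x Submodule.mem_top m hm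
  conv_lhs => rw [← hdec, Submodule.map₂_sup_right, nonzeroPart, zeroPart_top]
  simp only [Submodule.map₂_iSup_left, Submodule.map₂_iSup_right, sup_le_iff, iSup_le_iff]
  refine ⟨fun α hα β _ => ?_, fun α hα β _ => ?_⟩
  · exact Submodule.map₂_le.mpr fun x hx y hy =>
      lie_mem_nonzeroPart_sup_zeroPart hΓ hx hy (Or.inr hα.2)
  · refine Submodule.map₂_le.mpr fun x hx m hm => ?_
    rw [bracketSpan_eq_map₂] at hm
    refine Submodule.mem_comap.mp <|
      (Submodule.map₂_le (r := Submodule.comap (B x) _)).mpr (fun p hp q hq => ?_) hm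
    change ⁅x, ⁅p, q⁆⁆ ∈ nonzeroPart H Γ ⊔ zeroPart F L ⊤ H Γ
    rw [leibniz_lie]
    exact add_mem
      (lie_mem_nonzeroPart_sup_zeroPart hΓ (lie_mem_wt_add hx hp) hq
        (Or.inr (neg_ne_zero.mpr hα.2.1)))
      (lie_mem_nonzeroPart_sup_zeroPart hΓ hp (lie_mem_wt_add hx hq) (Or.inl hα.2.1))

lemma toSubmodule_le_nonzeroPart_sup_zeroPart (hΓ : ∀ γ ∉ Γ, wt F L H γ = ⊥)
    {g : LieSubalgebra F L} [LieAlgebra.IsSimple F g]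
    (hnorm : ∀ x ∈ g, (∀ h ∈ H, ⁅x, h⁆ ∈ H) → x ∈ H)
    (hg : g.toSubmodule = ⨆ α, wt F L H α ⊓ g.toSubmodule) :
    g.toSubmodule ≤ nonzeroPart H Γ ⊔ zeroPart F L ⊤ H Γ := by
  refine (le_bracketSpan_self g).trans ?_
  rw [bracketSpan_eq_map₂, hg, Submodule.map₂_iSup_left]
  refine iSup_le fun α => ?_
  rw [Submodule.map₂_iSup_right]
  refine iSup_le fun β => Submodule.map₂_le.mpr fun u hu v hv => ?_
  by_cases hαβ : α ≠ 0 ∨ β ≠ 0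
  · exact lie_mem_nonzeroPart_sup_zeroPart hΓ hu.1 hv.1 hαβ
  · obtain ⟨rfl, rfl⟩ : α = 0 ∧ β = 0 := by simpa [not_or] using hαβ
    have huv : ⁅u, v⁆ = 0 := by simpa using hv.1 ⟨u, wt_zero_inf_le hnorm hu⟩
    simp [huv]

lemma lieSpan_eq_nonzeroPart_sup_zeroPart {g : LieSubalgebra F L} [LieAlgebra.IsSimple F g]
    (hH : IsCartanIn F L g H) (hg : g.toSubmodule = ⨆ α, wt F L H α ⊓ g.toSubmodule)
    (hdec : (⨆ α ∈ Γ, wt F L H α) = ⊤) :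
    (LieSubmodule.lieSpan F L (g : Set L)).toSubmodule =
      nonzeroPart H Γ ⊔ zeroPart F L ⊤ H Γ := by
  obtain ⟨hHg, hnil, hnorm⟩ := hH
  have hΓ : ∀ γ ∉ Γ, wt F L H γ = ⊥ := fun _ => wt_eq_bot_of_notMem hdec
  let I : LieIdeal F L :=
    { toSubmodule := nonzeroPart H Γ ⊔ zeroPart F L ⊤ H Γ
      lie_mem := fun {x _} hm => lie_mem_nonzeroPart_sup_zeroPart_of_mem hΓ hdec x hm }
  refine le_antisymm ?_ (sup_le (nonzeroPart_le_lieSpan hHg) (zeroPart_le_lieSpan hHg ⊤))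
  exact (LieSubmodule.lieSpan_le (N := I)).mpr
    (toSubmodule_le_nonzeroPart_sup_zeroPart hΓ hnorm hg)

lemma wt_zero_eq_zeroPart_iff [LieRing.IsNilpotent H]
    (hdec : (⨆ α ∈ Γ, wt F L H α) = ⊤) :
    wt F L H 0 = zeroPart F L ⊤ H Γ ↔ ⊤ = nonzeroPart H Γ ⊔ zeroPart F L ⊤ H Γ := by
  constructor
  · intro h0
    refine le_antisymm ?_ le_top
    rw [← hdec]
    refine iSup₂_le fun α hα => ?_
    by_cases hα0 : α = 0
    · exact hα0 ▸ h0 ▸ le_sup_right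
    · exact le_sup_of_le_left (le_biSup (wt F L H) ⟨hα, hα0⟩)
  · intro htop
    have hdisj : Disjoint (wt F L H 0) (nonzeroPart H Γ) :=
      iSupIndep_wt.disjoint_biSup fun h => h.2 rfl
    refine le_antisymm ?_ (zeroPart_le_wt_zero ⊤)
    calc wt F L H 0 = wt F L H 0 ⊓ (zeroPart F L ⊤ H Γ ⊔ nonzeroPart H Γ) := by
          rw [sup_comm, ← htop, inf_top_eq]
      _ = zeroPart F L ⊤ H Γ ⊔ wt F L H 0 ⊓ nonzeroPart H Γ := by
          rw [inf_comm, sup_inf_assoc_of_le _ (zeroPart_le_wt_zero ⊤), inf_comm]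
      _ ≤ zeroPart F L ⊤ H Γ := by rw [hdisj.eq_bot, sup_bot_eq]

end WG

theorem stmt2_general {F : Type*} [Field F]
    {L : Type*} [LieRing L] [LieAlgebra F L]
    (g H : LieSubalgebra F L)
    [LieAlgebra.IsSimple F g]
    (hsplit : WG.IsSplitIn F L g H)
    (Γ : Set (Module.Dual F H))
    (hpre : WG.IsPregraded F L ⊤ g H Γ) :
    [WG.IsGraded F L ⊤ g H Γ,
     WG.wt F L H 0 = WG.zeroPart F L ⊤ H Γ,
     (⊤ : Submodule F L) = (⨆ α ∈ Γ \ {0}, WG.wt F L H α) ⊔ WG.zeroPart F L ⊤ H Γ,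
     LieSubmodule.lieSpan F L (g : Set L) = ⊤].TFAE := by
  obtain ⟨hH, hg⟩ := hsplit
  have hdec : (⨆ α ∈ Γ, WG.wt F L H α) = ⊤ := by simpa using hpre.2.2.2.2.2.symm
  have := hH.2.1
  tfae_have 1 ↔ 2 := by simp [WG.IsGraded, hpre]
  tfae_have 2 ↔ 3 := WG.wt_zero_eq_zeroPart_iff hdec
  tfae_have 3 ↔ 4 := by
    rw [← LieSubmodule.toSubmodule_eq_top, WG.lieSpan_eq_nonzeroPart_sup_zeroPart hH hg hdec,
      eq_comm, WG.nonzeroPart]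
  tfae_finish

/-- Let `g` be a split simple subalgebra of a Lie algebra `L` and
suppose `L` is `(Γ, g)`-pregraded.  Then the following are equivalent:
(1) `L` is `(Γ, g)`-graded;
(2) `L_0 = Σ_{α,-α ∈ Γ\{0}} ⁅L_α, L_{-α}⁆`;
(3) `L = ⨁_{α ∈ Γ\{0}} L_α + Σ_{α,-α ∈ Γ\{0}} ⁅L_α, L_{-α}⁆`;
(4) the ideal of `L` generated by `g` is all of `L`. -/
theorem stmt2 {F : Type*} [Field F] [CharZero F]
    {L : Type*} [LieRing L] [LieAlgebra F L]
    (g H : LieSubalgebra F L)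
    [LieAlgebra.IsSimple F g] [FiniteDimensional F g]
    (hsplit : WG.IsSplitIn F L g H)
    (Γ : Set (Module.Dual F H))
    (hpre : WG.IsPregraded F L ⊤ g H Γ) :
    [WG.IsGraded F L ⊤ g H Γ,
     WG.wt F L H 0 = WG.zeroPart F L ⊤ H Γ,
     (⊤ : Submodule F L) = (⨆ α ∈ Γ \ {0}, WG.wt F L H α) ⊔ WG.zeroPart F L ⊤ H Γ,
     LieSubmodule.lieSpan F L (g : Set L) = ⊤].TFAE :=
  stmt2_general g H hsplit Γ hpre
end

section
/- Under the stated coordinate setup, 𝒜 = A⁻ ⊕ A⁺ is a unital associative subalgebra of the algebra 𝔞, i.e. 𝒜 is closed under the product α₁α₂ = ½[α₁,α₂] + ½(α₁∘α₂) and contains the identity 1⁺. -/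
namespace WG

variable (F : Type*) [Field F]
variable (L : Type*) [LieRing L] [LieAlgebra F L]

attribute [instance 100] LieRing.ofAssociativeRing

end WG
namespace WG

section WeightSets

variable {W : Type*} [AddCommGroup W] {r : ℕ}

/-- `{±δ_i ± δ_j | i ≠ j}`. -/
def pmSet (δ : Fin r → W) : Set W :=
  {α | ∃ i j, i ≠ j ∧
    (α = δ i + δ j ∨ α = δ i - δ j ∨ α = -δ i + δ j ∨ α = -δ i - δ j)}

/-- `{±δ_i}`. -/
def shortSet (δ : Fin r → W) : Set W :=
  {α | ∃ i, α = δ i ∨ α = -δ i}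

/-- `{±2δ_i}`. -/
def longSet (δ : Fin r → W) : Set W :=
  {α | ∃ i, α = δ i + δ i ∨ α = -(δ i + δ i)}

/-- The weight set `{0, ±δ_i ± δ_j, ±δ_i, ±2δ_i | i ≠ j}`.  For the weights
`ε_1, …, ε_{n+1}` of the natural `sl_{n+1}`-module this is the set `Â_n`; for a basis
`δ_1, …, δ_r` it is the set `BC_r ∪ {0}`. -/
def hatSet (δ : Fin r → W) : Set W :=
  {0} ∪ pmSet δ ∪ shortSet δ ∪ longSet δ

/-- The root system of type `A` in the weights `ε_i`: `{ε_i - ε_j | i ≠ j}`. -/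
def aRoots (ε : Fin r → W) : Set W :=
  {α | ∃ i j, i ≠ j ∧ α = ε i - ε j}

/-- The root system of type `B_r`: `{±δ_i ± δ_j, ±δ_i | i ≠ j}`. -/
def bRoots (δ : Fin r → W) : Set W := pmSet δ ∪ shortSet δ

/-- The root system of type `C_r`: `{±δ_i ± δ_j, ±2δ_i | i ≠ j}`. -/
def cRoots (δ : Fin r → W) : Set W := pmSet δ ∪ longSet δ

/-- The root system of type `D_r`: `{±δ_i ± δ_j | i ≠ j}`. -/
def dRoots (δ : Fin r → W) : Set W := pmSet δ

end WeightSets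

section MatrixModules

open Matrix

variable (F : Type*) [Field F] (m : ℕ)

/-- The symmetric `m × m` matrices. -/
def symM : Submodule F (Matrix (Fin m) (Fin m) F) where
  carrier := {x | xᵀ = x}
  add_mem' := by
    intro a b ha hb
    simp only [Set.mem_setOf_eq] at *
    simp [Matrix.transpose_add, ha, hb]
  zero_mem' := by simp
  smul_mem' := by
    intro c x hx
    simp only [Set.mem_setOf_eq] at *
    simp [Matrix.transpose_smul, hx]

/-- The skew-symmetric `m × m` matrices. -/
def skewM : Submodule F (Matrix (Fin m) (Fin m) F) where
  carrier := {x | xᵀ = -x}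
  add_mem' := by
    intro a b ha hb
    simp only [Set.mem_setOf_eq] at *
    simp [Matrix.transpose_add, ha, hb]
    abel
  zero_mem' := by simp
  smul_mem' := by
    intro c x hx
    simp only [Set.mem_setOf_eq] at *
    simp [Matrix.transpose_smul, hx]

variable {F m}

/-- The action `x.s = xs + sxᵗ` of `sl_m` on symmetric matrices. -/
def symAct (x : Matrix (Fin m) (Fin m) F) (s : symM F m) : symM F m :=
  ⟨x * s + (s : Matrix (Fin m) (Fin m) F) * xᵀ, by
    have hs : (s : Matrix (Fin m) (Fin m) F)ᵀ = s := s.2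
    show (x * (s : Matrix (Fin m) (Fin m) F) + (s : Matrix (Fin m) (Fin m) F) * xᵀ)ᵀ = _
    simp [Matrix.transpose_add, Matrix.transpose_mul, hs, add_comm]⟩

/-- `xs - sxᵗ` is skew-symmetric for `s` symmetric. -/
def symActSkew (x : Matrix (Fin m) (Fin m) F) (s : symM F m) : skewM F m :=
  ⟨x * s - (s : Matrix (Fin m) (Fin m) F) * xᵀ, by
    have hs : (s : Matrix (Fin m) (Fin m) F)ᵀ = s := s.2
    show (x * (s : Matrix (Fin m) (Fin m) F) - (s : Matrix (Fin m) (Fin m) F) * xᵀ)ᵀ = _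
    simp [Matrix.transpose_sub, Matrix.transpose_mul, hs, neg_sub]⟩

/-- The action `x.λ = xλ + λxᵗ` of `sl_m` on skew-symmetric matrices. -/
def skewAct (x : Matrix (Fin m) (Fin m) F) (l : skewM F m) : skewM F m :=
  ⟨x * l + (l : Matrix (Fin m) (Fin m) F) * xᵀ, by
    have hl : (l : Matrix (Fin m) (Fin m) F)ᵀ = -l := l.2
    show (x * (l : Matrix (Fin m) (Fin m) F) + (l : Matrix (Fin m) (Fin m) F) * xᵀ)ᵀ = _
    simp only [Matrix.transpose_add, Matrix.transpose_mul, Matrix.transpose_transpose, hl,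
      Matrix.neg_mul, Matrix.mul_neg, neg_add_rev]
    try abel⟩

/-- `xλ - λxᵗ` is symmetric for `λ` skew-symmetric. -/
def skewActSym (x : Matrix (Fin m) (Fin m) F) (l : skewM F m) : symM F m :=
  ⟨x * l - (l : Matrix (Fin m) (Fin m) F) * xᵀ, by
    have hl : (l : Matrix (Fin m) (Fin m) F)ᵀ = -l := l.2
    show (x * (l : Matrix (Fin m) (Fin m) F) - (l : Matrix (Fin m) (Fin m) F) * xᵀ)ᵀ = _
    simp only [Matrix.transpose_sub, Matrix.transpose_mul, Matrix.transpose_transpose, hl,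
      Matrix.neg_mul, Matrix.mul_neg, sub_neg_eq_add, neg_sub]
    try abel⟩

/-- `s'x + xᵗs'` (symmetric). -/
def symActR (s' : symM F m) (x : Matrix (Fin m) (Fin m) F) : symM F m :=
  ⟨(s' : Matrix (Fin m) (Fin m) F) * x + xᵀ * s', by
    have hs : (s' : Matrix (Fin m) (Fin m) F)ᵀ = s' := s'.2
    show ((s' : Matrix (Fin m) (Fin m) F) * x + xᵀ * (s' : Matrix (Fin m) (Fin m) F))ᵀ = _
    simp [Matrix.transpose_add, Matrix.transpose_mul, hs, add_comm]⟩

/-- `s'x - xᵗs'` (skew-symmetric). -/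
def symActRSkew (s' : symM F m) (x : Matrix (Fin m) (Fin m) F) : skewM F m :=
  ⟨(s' : Matrix (Fin m) (Fin m) F) * x - xᵀ * s', by
    have hs : (s' : Matrix (Fin m) (Fin m) F)ᵀ = s' := s'.2
    show ((s' : Matrix (Fin m) (Fin m) F) * x - xᵀ * (s' : Matrix (Fin m) (Fin m) F))ᵀ = _
    simp [Matrix.transpose_sub, Matrix.transpose_mul, hs, neg_sub]⟩

/-- `λ'x + xᵗλ'` (skew-symmetric). -/
def skewActR (l' : skewM F m) (x : Matrix (Fin m) (Fin m) F) : skewM F m :=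
  ⟨(l' : Matrix (Fin m) (Fin m) F) * x + xᵀ * l', by
    have hl : (l' : Matrix (Fin m) (Fin m) F)ᵀ = -l' := l'.2
    show ((l' : Matrix (Fin m) (Fin m) F) * x + xᵀ * (l' : Matrix (Fin m) (Fin m) F))ᵀ = _
    simp only [Matrix.transpose_add, Matrix.transpose_mul, Matrix.transpose_transpose, hl,
      Matrix.neg_mul, Matrix.mul_neg, neg_add_rev]
    try abel⟩

/-- `λ'x - xᵗλ'` (symmetric). -/
def skewActRSym (l' : skewM F m) (x : Matrix (Fin m) (Fin m) F) : symM F m :=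
  ⟨(l' : Matrix (Fin m) (Fin m) F) * x - xᵀ * l', by
    have hl : (l' : Matrix (Fin m) (Fin m) F)ᵀ = -l' := l'.2
    show ((l' : Matrix (Fin m) (Fin m) F) * x - xᵀ * (l' : Matrix (Fin m) (Fin m) F))ᵀ = _
    simp only [Matrix.transpose_sub, Matrix.transpose_mul, Matrix.transpose_transpose, hl,
      Matrix.neg_mul, Matrix.mul_neg, sub_neg_eq_add, neg_sub]
    try abel⟩

end MatrixModules

end WG
namespace WG

open Matrix

set_option maxHeartbeats 1000000

/-- `(n+1) × (n+1)` matrices over `F`. -/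
abbrev MatN (F : Type*) [Field F] (n : ℕ) := Matrix (Fin (n + 1)) (Fin (n + 1)) F

theorem nsucc_ne_zero (F : Type*) [Field F] [CharZero F] (n : ℕ) :
    ((n + 1 : ℕ) : F) ≠ 0 :=
  Nat.cast_ne_zero.mpr (Nat.succ_ne_zero n)

section CoordHelpers

variable {F : Type*} [Field F] [CharZero F] {n : ℕ}

/-- The trace-zero projection `m ↦ m - (tr m / (n+1)) • 1`. -/
def projSl (m : MatN F n) : slL F (n + 1) :=
  ⟨m - (Matrix.trace m / ((n + 1 : ℕ) : F)) • (1 : MatN F n), by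
    show Matrix.trace _ = 0
    rw [Matrix.trace_sub, Matrix.trace_smul, Matrix.trace_one, Fintype.card_fin,
      smul_eq_mul, div_mul_cancel₀ _ (nsucc_ne_zero F n), sub_self]⟩

/-- `x ∘ y = xy + yx - (2/(n+1)) tr(xy) • 1`. -/
def circSl (x y : slL F (n + 1)) : slL F (n + 1) :=
  projSl ((x : MatN F n) * (y : MatN F n) + (y : MatN F n) * (x : MatN F n))

/-- `(x | y) = tr(xy)/(n+1)`. -/
def traceF (x y : MatN F n) : F :=
  Matrix.trace (x * y) / ((n + 1 : ℕ) : F)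

/-- `uvᵗ + vuᵗ` (symmetric). -/
def symVV (u v : Fin (n + 1) → F) : symM F (n + 1) :=
  ⟨Matrix.vecMulVec u v + Matrix.vecMulVec v u, by
    show _ᵀ = _
    ext i j
    simp only [Matrix.transpose_apply, Matrix.add_apply, Matrix.vecMulVec_apply]
    ring⟩

/-- `uvᵗ - vuᵗ` (skew-symmetric). -/
def skewVV (u v : Fin (n + 1) → F) : skewM F (n + 1) :=
  ⟨Matrix.vecMulVec u v - Matrix.vecMulVec v u, by
    show _ᵀ = _
    ext i j
    simp only [Matrix.transpose_apply, Matrix.sub_apply, Matrix.vecMulVec_apply,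
      Matrix.neg_apply]
    ring⟩

end CoordHelpers

section TotalMap

open scoped TensorProduct

variable {F : Type*} [Field F] [CharZero F] {n : ℕ}
variable {A B B' C C' E E' D L : Type*}
variable [AddCommGroup A] [Module F A] [AddCommGroup B] [Module F B]
variable [AddCommGroup B'] [Module F B'] [AddCommGroup C] [Module F C]
variable [AddCommGroup C'] [Module F C'] [AddCommGroup E] [Module F E]
variable [AddCommGroup E'] [Module F E'] [AddCommGroup D] [Module F D]
variable [LieRing L] [LieAlgebra F L]

/-- The total linear map
`(g ⊗ A) × (V ⊗ B) × (V' ⊗ B') × (S ⊗ C) × (S' ⊗ C') × (Λ ⊗ E) × (Λ' ⊗ E') × D → L`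
assembled from the structure maps of the decomposition (1.1). -/
noncomputable def totalMap
    (ιg : slL F (n + 1) →ₗ[F] A →ₗ[F] L)
    (ιV : (Fin (n + 1) → F) →ₗ[F] B →ₗ[F] L)
    (ιV' : (Fin (n + 1) → F) →ₗ[F] B' →ₗ[F] L)
    (ιS : symM F (n + 1) →ₗ[F] C →ₗ[F] L)
    (ιS' : symM F (n + 1) →ₗ[F] C' →ₗ[F] L)
    (ιE : skewM F (n + 1) →ₗ[F] E →ₗ[F] L)
    (ιE' : skewM F (n + 1) →ₗ[F] E' →ₗ[F] L)
    (ιD : D →ₗ[F] L) :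
    ((↥(slL F (n + 1)) ⊗[F] A) × ((Fin (n + 1) → F) ⊗[F] B) × ((Fin (n + 1) → F) ⊗[F] B') ×
      (↥(symM F (n + 1)) ⊗[F] C) × (↥(symM F (n + 1)) ⊗[F] C') ×
      (↥(skewM F (n + 1)) ⊗[F] E) × (↥(skewM F (n + 1)) ⊗[F] E') × D) →ₗ[F] L :=
  (TensorProduct.lift ιg).coprod <| (TensorProduct.lift ιV).coprod <|
    (TensorProduct.lift ιV').coprod <| (TensorProduct.lift ιS).coprod <|
    (TensorProduct.lift ιS').coprod <| (TensorProduct.lift ιE).coprod <|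
    (TensorProduct.lift ιE').coprod ιD

end TotalMap

end WG
namespace WG

open Matrix

set_option maxHeartbeats 2000000

/-- The coordinate setup for an `Â_n`-graded Lie algebra `L` (for `n ≥ 6`, or
`n ∈ {4,5}` together with the conditions (1.2), which here appear as the fields
`zero_LL`, `zero_L'L'`, `zero_LV` and `zero_L'V'`):
`L = g⊗A ⊕ V⊗B ⊕ V'⊗B' ⊕ S⊗C ⊕ S'⊗C' ⊕ Λ⊗E ⊕ Λ'⊗E' ⊕ D` with `g = sl_{n+1}`,
with the Lie bracket of `L` given on the components by the formulas (5.1). -/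
structure CoordSetup (F : Type*) [Field F] [CharZero F] (n : ℕ)
    (A B B' C C' E E' D L : Type*)
    [AddCommGroup A] [Module F A] [AddCommGroup B] [Module F B]
    [AddCommGroup B'] [Module F B'] [AddCommGroup C] [Module F C]
    [AddCommGroup C'] [Module F C'] [AddCommGroup E] [Module F E]
    [AddCommGroup E'] [Module F E'] [AddCommGroup D] [Module F D]
    [LieRing L] [LieAlgebra F L] : Type _ where
  -- the bilinear products among the multiplicity spaces (Table 3)
  circA : A →ₗ[F] A →ₗ[F] A            -- `a₁ ∘ a₂`
  brA : A →ₗ[F] A →ₗ[F] A              -- `[a₁, a₂]`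
  dA : A →ₗ[F] A →ₗ[F] D               -- `⟨a₁, a₂⟩`
  pAB : A →ₗ[F] B →ₗ[F] B              -- `(a, b)_B`
  pB'A : B' →ₗ[F] A →ₗ[F] B'           -- `(b', a)_{B'}`
  pBB'A : B →ₗ[F] B' →ₗ[F] A           -- `(b, b')_A`
  dBB' : B →ₗ[F] B' →ₗ[F] D            -- `⟨b, b'⟩`
  pBBC : B →ₗ[F] B →ₗ[F] C             -- `(b₁, b₂)_C`
  pBBE : B →ₗ[F] B →ₗ[F] E             -- `(b₁, b₂)_E`
  pB'B'C' : B' →ₗ[F] B' →ₗ[F] C'       -- `(b₁', b₂')_{C'}`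
  pB'B'E' : B' →ₗ[F] B' →ₗ[F] E'       -- `(b₁', b₂')_{E'}`
  pACC : A →ₗ[F] C →ₗ[F] C             -- `(a, c)_C`
  pACE : A →ₗ[F] C →ₗ[F] E             -- `(a, c)_E`
  pAEE : A →ₗ[F] E →ₗ[F] E             -- `(a, e)_E`
  pAEC : A →ₗ[F] E →ₗ[F] C             -- `(a, e)_C`
  pC'AC' : C' →ₗ[F] A →ₗ[F] C'         -- `(c', a)_{C'}`
  pC'AE' : C' →ₗ[F] A →ₗ[F] E'         -- `(c', a)_{E'}`
  pE'AE' : E' →ₗ[F] A →ₗ[F] E'         -- `(e', a)_{E'}`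
  pE'AC' : E' →ₗ[F] A →ₗ[F] C'         -- `(e', a)_{C'}`
  pCC'A : C →ₗ[F] C' →ₗ[F] A           -- `(c, c')_A`
  dCC' : C →ₗ[F] C' →ₗ[F] D            -- `⟨c, c'⟩`
  pEE'A : E →ₗ[F] E' →ₗ[F] A           -- `(e, e')_A`
  dEE' : E →ₗ[F] E' →ₗ[F] D            -- `⟨e, e'⟩`
  pCE'A : C →ₗ[F] E' →ₗ[F] A           -- `(c, e')_A`
  pC'EA : C' →ₗ[F] E →ₗ[F] A           -- `(c', e)_A`
  pC'B : C' →ₗ[F] B →ₗ[F] B'           -- `(c', b)_{B'}`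
  pE'B : E' →ₗ[F] B →ₗ[F] B'           -- `(e', b)_{B'}`
  pB'C : B' →ₗ[F] C →ₗ[F] B            -- `(b', c)_B`
  pB'E : B' →ₗ[F] E →ₗ[F] B            -- `(b', e)_B`
  dActA : D →ₗ[F] A →ₗ[F] A            -- the action of `D` on `A`
  dActB : D →ₗ[F] B →ₗ[F] B
  dActB' : D →ₗ[F] B' →ₗ[F] B'
  dActC : D →ₗ[F] C →ₗ[F] C
  dActC' : D →ₗ[F] C' →ₗ[F] C'
  dActE : D →ₗ[F] E →ₗ[F] E
  dActE' : D →ₗ[F] E' →ₗ[F] E'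
  dD : D →ₗ[F] D →ₗ[F] D
  -- the distinguished element `1 ∈ A` with `g = g ⊗ 1`
  one : A
  -- the components of the decomposition (1.1), as bilinear maps into `L`
  ιg : slL F (n + 1) →ₗ[F] A →ₗ[F] L
  ιV : (Fin (n + 1) → F) →ₗ[F] B →ₗ[F] L
  ιV' : (Fin (n + 1) → F) →ₗ[F] B' →ₗ[F] L
  ιS : symM F (n + 1) →ₗ[F] C →ₗ[F] L
  ιS' : symM F (n + 1) →ₗ[F] C' →ₗ[F] L
  ιE : skewM F (n + 1) →ₗ[F] E →ₗ[F] L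
  ιE' : skewM F (n + 1) →ₗ[F] E' →ₗ[F] L
  ιD : D →ₗ[F] L
  -- the decomposition (1.1) is a direct sum decomposition of `L`
  bij : Function.Bijective (totalMap ιg ιV ιV' ιS ιS' ιE ιE' ιD)
  -- the multiplication formulas (5.1)
  rel_gg : ∀ (x y : slL F (n + 1)) (a₁ a₂ : A),
    ⁅ιg x a₁, ιg y a₂⁆ =
      ιg (circSl x y) ((2⁻¹ : F) • brA a₁ a₂) + ιg ⁅x, y⁆ ((2⁻¹ : F) • circA a₁ a₂) +
        ιD (traceF (x : MatN F n) (y : MatN F n) • dA a₁ a₂)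
  rel_VV' : ∀ (u v' : Fin (n + 1) → F) (b : B) (b' : B'),
    ⁅ιV u b, ιV' v' b'⁆ =
      ιg (projSl (Matrix.vecMulVec u v')) (pBB'A b b') +
        ιD ((Matrix.trace (Matrix.vecMulVec u v') / ((n + 1 : ℕ) : F)) • dBB' b b')
  rel_SS' : ∀ (s s' : symM F (n + 1)) (c : C) (c' : C'),
    ⁅ιS s c, ιS' s' c'⁆ =
      ιg (projSl ((s : MatN F n) * (s' : MatN F n))) (pCC'A c c') +
        ιD (traceF (s : MatN F n) (s' : MatN F n) • dCC' c c')
  rel_LL' : ∀ (l l' : skewM F (n + 1)) (e : E) (e' : E'),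
    ⁅ιE l e, ιE' l' e'⁆ =
      ιg (projSl ((l : MatN F n) * (l' : MatN F n))) (pEE'A e e') +
        ιD (traceF (l : MatN F n) (l' : MatN F n) • dEE' e e')
  rel_VV : ∀ (u v : Fin (n + 1) → F) (b₁ b₂ : B),
    ⁅ιV u b₁, ιV v b₂⁆ =
      ιS (symVV u v) ((2⁻¹ : F) • pBBC b₁ b₂) + ιE (skewVV u v) ((2⁻¹ : F) • pBBE b₁ b₂)
  rel_V'V' : ∀ (u' v' : Fin (n + 1) → F) (b₁' b₂' : B'),
    ⁅ιV' u' b₁', ιV' v' b₂'⁆ =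
      ιS' (symVV u' v') ((2⁻¹ : F) • pB'B'C' b₁' b₂') +
        ιE' (skewVV u' v') ((2⁻¹ : F) • pB'B'E' b₁' b₂')
  rel_gS : ∀ (x : slL F (n + 1)) (a : A) (s : symM F (n + 1)) (c : C),
    ⁅ιg x a, ιS s c⁆ =
      ιS (symAct (x : MatN F n) s) ((2⁻¹ : F) • pACC a c) +
        ιE (symActSkew (x : MatN F n) s) ((2⁻¹ : F) • pACE a c)
  rel_gL : ∀ (x : slL F (n + 1)) (a : A) (l : skewM F (n + 1)) (e : E),
    ⁅ιg x a, ιE l e⁆ =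
      ιE (skewAct (x : MatN F n) l) ((2⁻¹ : F) • pAEE a e) +
        ιS (skewActSym (x : MatN F n) l) ((2⁻¹ : F) • pAEC a e)
  rel_S'g : ∀ (s' : symM F (n + 1)) (c' : C') (x : slL F (n + 1)) (a : A),
    ⁅ιS' s' c', ιg x a⁆ =
      ιS' (symActR s' (x : MatN F n)) ((2⁻¹ : F) • pC'AC' c' a) +
        ιE' (symActRSkew s' (x : MatN F n)) ((2⁻¹ : F) • pC'AE' c' a)
  rel_L'g : ∀ (l' : skewM F (n + 1)) (e' : E') (x : slL F (n + 1)) (a : A),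
    ⁅ιE' l' e', ιg x a⁆ =
      ιE' (skewActR l' (x : MatN F n)) ((2⁻¹ : F) • pE'AE' e' a) +
        ιS' (skewActRSym l' (x : MatN F n)) ((2⁻¹ : F) • pE'AC' e' a)
  rel_SL' : ∀ (s : symM F (n + 1)) (c : C) (l' : skewM F (n + 1)) (e' : E'),
    ⁅ιS s c, ιE' l' e'⁆ = ιg (projSl ((s : MatN F n) * (l' : MatN F n))) (pCE'A c e')
  rel_S'L : ∀ (s' : symM F (n + 1)) (c' : C') (l : skewM F (n + 1)) (e : E),
    ⁅ιS' s' c', ιE l e⁆ = ιg (projSl ((s' : MatN F n) * (l : MatN F n))) (pC'EA c' e)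
  rel_gV : ∀ (x : slL F (n + 1)) (a : A) (u : Fin (n + 1) → F) (b : B),
    ⁅ιg x a, ιV u b⁆ = ιV ((x : MatN F n) *ᵥ u) (pAB a b)
  rel_S'V : ∀ (s' : symM F (n + 1)) (c' : C') (u : Fin (n + 1) → F) (b : B),
    ⁅ιS' s' c', ιV u b⁆ = ιV' ((s' : MatN F n) *ᵥ u) (pC'B c' b)
  rel_L'V : ∀ (l' : skewM F (n + 1)) (e' : E') (u : Fin (n + 1) → F) (b : B),
    ⁅ιE' l' e', ιV u b⁆ = ιV' ((l' : MatN F n) *ᵥ u) (pE'B e' b)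
  rel_V'g : ∀ (u' : Fin (n + 1) → F) (b' : B') (x : slL F (n + 1)) (a : A),
    ⁅ιV' u' b', ιg x a⁆ = ιV' ((x : MatN F n)ᵀ *ᵥ u') (pB'A b' a)
  rel_V'S : ∀ (u' : Fin (n + 1) → F) (b' : B') (s : symM F (n + 1)) (c : C),
    ⁅ιV' u' b', ιS s c⁆ = ιV ((s : MatN F n) *ᵥ u') (pB'C b' c)
  rel_V'L : ∀ (u' : Fin (n + 1) → F) (b' : B') (l : skewM F (n + 1)) (e : E),
    ⁅ιV' u' b', ιE l e⁆ = -ιV ((l : MatN F n) *ᵥ u') (pB'E b' e)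
  -- the action of `D`
  rel_Dg : ∀ (d : D) (x : slL F (n + 1)) (a : A), ⁅ιD d, ιg x a⁆ = ιg x (dActA d a)
  rel_DV : ∀ (d : D) (u : Fin (n + 1) → F) (b : B), ⁅ιD d, ιV u b⁆ = ιV u (dActB d b)
  rel_DV' : ∀ (d : D) (u' : Fin (n + 1) → F) (b' : B'),
    ⁅ιD d, ιV' u' b'⁆ = ιV' u' (dActB' d b')
  rel_DS : ∀ (d : D) (s : symM F (n + 1)) (c : C), ⁅ιD d, ιS s c⁆ = ιS s (dActC d c)
  rel_DS' : ∀ (d : D) (s' : symM F (n + 1)) (c' : C'),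
    ⁅ιD d, ιS' s' c'⁆ = ιS' s' (dActC' d c')
  rel_DL : ∀ (d : D) (l : skewM F (n + 1)) (e : E), ⁅ιD d, ιE l e⁆ = ιE l (dActE d e)
  rel_DL' : ∀ (d : D) (l' : skewM F (n + 1)) (e' : E'),
    ⁅ιD d, ιE' l' e'⁆ = ιE' l' (dActE' d e')
  rel_DD : ∀ d₁ d₂ : D, ⁅ιD d₁, ιD d₂⁆ = ιD (dD d₁ d₂)
  -- all other products of homogeneous components are zero
  zero_SS : ∀ (s t : symM F (n + 1)) (c₁ c₂ : C), ⁅ιS s c₁, ιS t c₂⁆ = 0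
  zero_SL : ∀ (s : symM F (n + 1)) (c : C) (l : skewM F (n + 1)) (e : E),
    ⁅ιS s c, ιE l e⁆ = 0
  zero_LL : ∀ (l₁ l₂ : skewM F (n + 1)) (e₁ e₂ : E), ⁅ιE l₁ e₁, ιE l₂ e₂⁆ = 0
  zero_S'S' : ∀ (s' t' : symM F (n + 1)) (c₁' c₂' : C'), ⁅ιS' s' c₁', ιS' t' c₂'⁆ = 0
  zero_S'L' : ∀ (s' : symM F (n + 1)) (c' : C') (l' : skewM F (n + 1)) (e' : E'),
    ⁅ιS' s' c', ιE' l' e'⁆ = 0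
  zero_L'L' : ∀ (l₁' l₂' : skewM F (n + 1)) (e₁' e₂' : E'),
    ⁅ιE' l₁' e₁', ιE' l₂' e₂'⁆ = 0
  zero_SV : ∀ (s : symM F (n + 1)) (c : C) (u : Fin (n + 1) → F) (b : B),
    ⁅ιS s c, ιV u b⁆ = 0
  zero_LV : ∀ (l : skewM F (n + 1)) (e : E) (u : Fin (n + 1) → F) (b : B),
    ⁅ιE l e, ιV u b⁆ = 0
  zero_S'V' : ∀ (s' : symM F (n + 1)) (c' : C') (u' : Fin (n + 1) → F) (b' : B'),
    ⁅ιS' s' c', ιV' u' b'⁆ = 0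
  zero_L'V' : ∀ (l' : skewM F (n + 1)) (e' : E') (u' : Fin (n + 1) → F) (b' : B'),
    ⁅ιE' l' e', ιV' u' b'⁆ = 0
  -- `g = g ⊗ 1`: the subalgebra `g` acts through the distinguished element `1 ∈ A`
  one_gg : ∀ (x y : slL F (n + 1)) (a : A), ⁅ιg x one, ιg y a⁆ = ιg ⁅x, y⁆ a
  one_gV : ∀ (x : slL F (n + 1)) (u : Fin (n + 1) → F) (b : B),
    ⁅ιg x one, ιV u b⁆ = ιV ((x : MatN F n) *ᵥ u) b
  one_gV' : ∀ (x : slL F (n + 1)) (u' : Fin (n + 1) → F) (b' : B'),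
    ⁅ιg x one, ιV' u' b'⁆ = -ιV' ((x : MatN F n)ᵀ *ᵥ u') b'
  one_gS : ∀ (x : slL F (n + 1)) (s : symM F (n + 1)) (c : C),
    ⁅ιg x one, ιS s c⁆ = ιS (symAct (x : MatN F n) s) c
  one_gL : ∀ (x : slL F (n + 1)) (l : skewM F (n + 1)) (e : E),
    ⁅ιg x one, ιE l e⁆ = ιE (skewAct (x : MatN F n) l) e
  one_gS' : ∀ (x : slL F (n + 1)) (s' : symM F (n + 1)) (c' : C'),
    ⁅ιg x one, ιS' s' c'⁆ = -ιS' (symActR s' (x : MatN F n)) c'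
  one_gL' : ∀ (x : slL F (n + 1)) (l' : skewM F (n + 1)) (e' : E'),
    ⁅ιg x one, ιE' l' e'⁆ = -ιE' (skewActR l' (x : MatN F n)) e'

end WG
namespace WG

set_option maxHeartbeats 2000000

/-- The underlying space of the coordinate algebra `𝔞 = A⁺ ⊕ A⁻ ⊕ C ⊕ E ⊕ C' ⊕ E'`. -/
abbrev CoorA (A C E C' E' : Type*) := A × A × C × E × C' × E'

/-- The underlying space of the coordinate algebra
`𝔟 = 𝔞 ⊕ B ⊕ B' = A⁺ ⊕ A⁻ ⊕ C ⊕ E ⊕ C' ⊕ E' ⊕ B ⊕ B'`. -/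
abbrev CoorB (A C E C' E' B B' : Type*) := A × A × C × E × C' × E' × B × B'

section CoordAlgebra

variable {F : Type*} [Field F] [CharZero F] {n : ℕ}
variable {A B B' C C' E E' D L : Type*}
variable [AddCommGroup A] [Module F A] [AddCommGroup B] [Module F B]
variable [AddCommGroup B'] [Module F B'] [AddCommGroup C] [Module F C]
variable [AddCommGroup C'] [Module F C'] [AddCommGroup E] [Module F E]
variable [AddCommGroup E'] [Module F E'] [AddCommGroup D] [Module F D]
variable [LieRing L] [LieAlgebra F L]

/-- The multiplication `α₁α₂ = ½[α₁,α₂] + ½(α₁∘α₂)` of the coordinate algebra `𝔟`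
(Tables 4 and 5). -/
def bMul (S : CoordSetup F n A B B' C C' E E' D L) :
    CoorB A C E C' E' B B' → CoorB A C E C' E' B B' → CoorB A C E C' E' B B' :=
  fun x y =>
    match x, y with
    | (a1p, a1m, c1, e1, c1', e1', b1, b1'), (a2p, a2m, c2, e2, c2', e2', b2, b2') =>
      ((2⁻¹ : F) • (S.circA a1p a2p + S.circA a1m a2m + S.brA a1p a2m + S.brA a1m a2p +
          S.pCC'A c1 c2' + S.pCC'A c2 c1' + S.pEE'A e1 e2' + S.pEE'A e2 e1' +
          S.pCE'A c1 e2' - S.pCE'A c2 e1' + S.pC'EA c1' e2 - S.pC'EA c2' e1 +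
          S.pBB'A b1 b2' + S.pBB'A b2 b1'),
       (2⁻¹ : F) • (S.brA a1p a2p + S.brA a1m a2m + S.circA a1p a2m + S.circA a1m a2p +
          S.pCC'A c1 c2' - S.pCC'A c2 c1' + S.pEE'A e1 e2' - S.pEE'A e2 e1' +
          S.pCE'A c1 e2' + S.pCE'A c2 e1' + S.pC'EA c1' e2 + S.pC'EA c2' e1 +
          S.pBB'A b1 b2' - S.pBB'A b2 b1'),
       (2⁻¹ : F) • (S.pACC a1p c2 + S.pACC a1m c2 + S.pACC a2p c1 - S.pACC a2m c1 +
          S.pAEC a1p e2 + S.pAEC a1m e2 - S.pAEC a2p e1 + S.pAEC a2m e1 +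
          S.pBBC b1 b2),
       (2⁻¹ : F) • (S.pACE a1p c2 + S.pACE a1m c2 - S.pACE a2p c1 + S.pACE a2m c1 +
          S.pAEE a1p e2 + S.pAEE a1m e2 + S.pAEE a2p e1 - S.pAEE a2m e1 +
          S.pBBE b1 b2),
       (2⁻¹ : F) • (S.pC'AC' c1' a2m + S.pC'AC' c1' a2p - S.pC'AC' c2' a1m +
          S.pC'AC' c2' a1p + S.pE'AC' e1' a2m + S.pE'AC' e1' a2p + S.pE'AC' e2' a1m -
          S.pE'AC' e2' a1p + S.pB'B'C' b1' b2'),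
       (2⁻¹ : F) • (S.pC'AE' c1' a2m + S.pC'AE' c1' a2p + S.pC'AE' c2' a1m -
          S.pC'AE' c2' a1p + S.pE'AE' e1' a2m + S.pE'AE' e1' a2p - S.pE'AE' e2' a1m +
          S.pE'AE' e2' a1p + S.pB'B'E' b1' b2'),
       S.pAB a1p b2 + S.pAB a1m b2 + S.pAB a2p b1 - S.pAB a2m b1 +
         S.pB'C b1' c2 + S.pB'E b1' e2 - S.pB'C b2' c1 + S.pB'E b2' e1,
       S.pC'B c1' b2 + S.pE'B e1' b2 - S.pC'B c2' b1 + S.pE'B e2' b1 +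
         S.pB'A b1' a2p + S.pB'A b1' a2m + S.pB'A b2' a1p - S.pB'A b2' a1m)

/-- The multiplication of the coordinate algebra `𝔞` (Table 4): the restriction of the
multiplication of `𝔟`. -/
def aMul (S : CoordSetup F n A B B' C C' E E' D L) :
    CoorA A C E C' E' → CoorA A C E C' E' → CoorA A C E C' E' :=
  fun x y =>
    match x, y with
    | (a1p, a1m, c1, e1, c1', e1'), (a2p, a2m, c2, e2, c2', e2') =>
      ((2⁻¹ : F) • (S.circA a1p a2p + S.circA a1m a2m + S.brA a1p a2m + S.brA a1m a2p +
          S.pCC'A c1 c2' + S.pCC'A c2 c1' + S.pEE'A e1 e2' + S.pEE'A e2 e1' +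
          S.pCE'A c1 e2' - S.pCE'A c2 e1' + S.pC'EA c1' e2 - S.pC'EA c2' e1),
       (2⁻¹ : F) • (S.brA a1p a2p + S.brA a1m a2m + S.circA a1p a2m + S.circA a1m a2p +
          S.pCC'A c1 c2' - S.pCC'A c2 c1' + S.pEE'A e1 e2' - S.pEE'A e2 e1' +
          S.pCE'A c1 e2' + S.pCE'A c2 e1' + S.pC'EA c1' e2 + S.pC'EA c2' e1),
       (2⁻¹ : F) • (S.pACC a1p c2 + S.pACC a1m c2 + S.pACC a2p c1 - S.pACC a2m c1 +
          S.pAEC a1p e2 + S.pAEC a1m e2 - S.pAEC a2p e1 + S.pAEC a2m e1),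
       (2⁻¹ : F) • (S.pACE a1p c2 + S.pACE a1m c2 - S.pACE a2p c1 + S.pACE a2m c1 +
          S.pAEE a1p e2 + S.pAEE a1m e2 + S.pAEE a2p e1 - S.pAEE a2m e1),
       (2⁻¹ : F) • (S.pC'AC' c1' a2m + S.pC'AC' c1' a2p - S.pC'AC' c2' a1m +
          S.pC'AC' c2' a1p + S.pE'AC' e1' a2m + S.pE'AC' e1' a2p + S.pE'AC' e2' a1m -
          S.pE'AC' e2' a1p),
       (2⁻¹ : F) • (S.pC'AE' c1' a2m + S.pC'AE' c1' a2p + S.pC'AE' c2' a1m -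
          S.pC'AE' c2' a1p + S.pE'AE' e1' a2m + S.pE'AE' e1' a2p - S.pE'AE' e2' a1m +
          S.pE'AE' e2' a1p))

/-- The element `1⁺ ∈ 𝔞`. -/
def oneA (S : CoordSetup F n A B B' C C' E E' D L) : CoorA A C E C' E' :=
  (S.one, 0, 0, 0, 0, 0)

/-- The element `1⁺ ∈ 𝔟`. -/
def oneB (S : CoordSetup F n A B B' C C' E E' D L) : CoorB A C E C' E' B B' :=
  (S.one, 0, 0, 0, 0, 0, 0, 0)

/-- The linear transformation `γ` of `𝔞`: identity on `A⁺, E, E'` and `-1` on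
`A⁻, C, C'`. -/
def gammaA : CoorA A C E C' E' → CoorA A C E C' E' :=
  fun x => match x with
  | (ap, am, c, e, c', e') => (ap, -am, -c, e, -c', e')

/-- The linear transformation `η` of `𝔟`: it restricts to `γ` on `𝔞` and fixes `B` and
`B'`. -/
def etaB : CoorB A C E C' E' B B' → CoorB A C E C' E' B B' :=
  fun x => match x with
  | (ap, am, c, e, c', e', b, b') => (ap, -am, -c, e, -c', e', b, b')

/-- The embedding `𝔞 → 𝔟`. -/
def iaB : CoorA A C E C' E' → CoorB A C E C' E' B B' :=
  fun x => match x with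
  | (ap, am, c, e, c', e') => (ap, am, c, e, c', e', 0, 0)

/-- The element `b + b'` of `B ⊕ B' ⊆ 𝔟`. -/
def bElem (b : B) (b' : B') : CoorB A C E C' E' B B' :=
  (0, 0, 0, 0, 0, 0, b, b')

end CoordAlgebra

end WG
namespace WG

/-- The subspace `𝒜 = A⁺ ⊕ A⁻` of the coordinate algebra `𝔞`. -/
def Acal (A C E C' E' : Type*) [Zero C] [Zero E] [Zero C'] [Zero E'] :
    Set (CoorA A C E C' E') :=
  {x | x.2.2 = 0}

end WG
namespace WG

variable {F : Type*} [Field F] [CharZero F] {n : ℕ}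
variable {A B B' C C' E E' D L : Type*}
variable [AddCommGroup A] [Module F A] [AddCommGroup B] [Module F B]
variable [AddCommGroup B'] [Module F B'] [AddCommGroup C] [Module F C]
variable [AddCommGroup C'] [Module F C'] [AddCommGroup E] [Module F E]
variable [AddCommGroup E'] [Module F E'] [AddCommGroup D] [Module F D]
variable [LieRing L] [LieAlgebra F L]

/-- Every other term of Table 4 has a factor in `C`, `E`, `C'` or `E'`. -/
theorem aMul_Acal (S : CoordSetup F n A B B' C C' E E' D L) (a₁p a₁m a₂p a₂m : A) :
    aMul S (a₁p, a₁m, 0, 0, 0, 0) (a₂p, a₂m, 0, 0, 0, 0) =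
      ((2⁻¹ : F) • (S.circA a₁p a₂p + S.circA a₁m a₂m + S.brA a₁p a₂m + S.brA a₁m a₂p),
       (2⁻¹ : F) • (S.brA a₁p a₂p + S.brA a₁m a₂m + S.circA a₁p a₂m + S.circA a₁m a₂p),
       0, 0, 0, 0) := by
  simp [aMul]

theorem aMul_mem_Acal (S : CoordSetup F n A B B' C C' E E' D L) {x y : CoorA A C E C' E'}
    (hx : x ∈ Acal A C E C' E') (hy : y ∈ Acal A C E C' E') :
    aMul S x y ∈ Acal A C E C' E' := by
  obtain ⟨a₁p, a₁m, r₁⟩ := x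
  obtain ⟨a₂p, a₂m, r₂⟩ := y
  obtain rfl : r₁ = 0 := hx
  obtain rfl : r₂ = 0 := hy
  show aMul S (a₁p, a₁m, 0, 0, 0, 0) (a₂p, a₂m, 0, 0, 0, 0) ∈ _
  rw [aMul_Acal]
  rfl

theorem oneA_mem_Acal (S : CoordSetup F n A B B' C C' E E' D L) :
    oneA S ∈ Acal A C E C' E' :=
  rfl

end WG

theorem stmt13_general {F : Type*} [Field F] [CharZero F] (n : ℕ)
    {A B B' C C' E E' D L : Type*}
    [AddCommGroup A] [Module F A] [AddCommGroup B] [Module F B]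
    [AddCommGroup B'] [Module F B'] [AddCommGroup C] [Module F C]
    [AddCommGroup C'] [Module F C'] [AddCommGroup E] [Module F E]
    [AddCommGroup E'] [Module F E'] [AddCommGroup D] [Module F D]
    [LieRing L] [LieAlgebra F L]
    (S : WG.CoordSetup F n A B B' C C' E E' D L) :
    (∀ x ∈ WG.Acal A C E C' E', ∀ y ∈ WG.Acal A C E C' E',
      WG.aMul S x y ∈ WG.Acal A C E C' E') ∧
    WG.oneA S ∈ WG.Acal A C E C' E' :=
  ⟨fun _ hx _ hy => WG.aMul_mem_Acal S hx hy, WG.oneA_mem_Acal S⟩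

/-- Under the stated coordinate setup, `𝒜 = A⁻ ⊕ A⁺` is a unital
associative subalgebra of the algebra `𝔞`, i.e. `𝒜` is closed under the product
`α₁α₂ = ½[α₁,α₂] + ½(α₁∘α₂)` and contains the identity `1⁺`. -/
theorem stmt13 {F : Type*} [Field F] [CharZero F] (n : ℕ) (hn : 4 ≤ n)
    {A B B' C C' E E' D L : Type*}
    [AddCommGroup A] [Module F A] [AddCommGroup B] [Module F B]
    [AddCommGroup B'] [Module F B'] [AddCommGroup C] [Module F C]
    [AddCommGroup C'] [Module F C'] [AddCommGroup E] [Module F E]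
    [AddCommGroup E'] [Module F E'] [AddCommGroup D] [Module F D]
    [LieRing L] [LieAlgebra F L]
    (S : WG.CoordSetup F n A B B' C C' E E' D L) :
    (∀ x ∈ WG.Acal A C E C' E', ∀ y ∈ WG.Acal A C E C' E',
      WG.aMul S x y ∈ WG.Acal A C E C' E') ∧
    WG.oneA S ∈ WG.Acal A C E C' E' :=
  stmt13_general n S
end

section
/- Under the stated coordinate setup, let A carry the associative product aa' = ½(a∘a') + ½[a,a'] with unit 1, let A^op be its opposite algebra (written with elements aᵗ, a ∈ A), and let Ã = A ⊕ A^op (direct sum of ideals) with the exchange involution σ(a + bᵗ) = b + aᵗ. Then the map φ : Ã → 𝒜 = A⁻ ⊕ A⁺ defined by φ(a + aᵗ) = a⁺ and φ(a − aᵗ) = a⁻ is an isomorphism of algebras with involution, where 𝒜 carries the involution γ|_𝒜 (γ(a⁺) = a⁺, γ(a⁻) = −a⁻); in particular 𝒜 ≅ A ⊕ A^op as algebras with involution. -/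
/-!
In coordinates `φ(a, b) = (½(a + b), ½(a - b))`; this is invertible because `2 ≠ 0` and
visibly intertwines the exchange involution with `γ`. It is multiplicative as soon as `∘` is
commutative and `[·,·]` is skew-symmetric on `A`. Both come from the antisymmetry of the
bracket of `L`: for `x = E₀₁`, `y = E₁₂` in `sl_{n+1}` one has `x ∘ y = y ∘ x = [x, y] = E₀₂`
and `(x | y) = 0`, so comparing `[x ⊗ a₁, y ⊗ a₂]` with `-[y ⊗ a₂, x ⊗ a₁]` in `E₀₂ ⊗ A`
(faithful since `L` is the direct sum of its components) gives
`[a₁, a₂] + [a₂, a₁] = a₂ ∘ a₁ - a₁ ∘ a₂`. The left side is symmetric and the right side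
antisymmetric in `(a₁, a₂)`, so both vanish.
-/

attribute [local instance 100] LieRing.ofAssociativeRing

namespace WG

section Stmt14Defs

variable {F : Type*} [Field F] [CharZero F] {n : ℕ}
variable {A B B' C C' E E' D L : Type*}
variable [AddCommGroup A] [Module F A] [AddCommGroup B] [Module F B]
variable [AddCommGroup B'] [Module F B'] [AddCommGroup C] [Module F C]
variable [AddCommGroup C'] [Module F C'] [AddCommGroup E] [Module F E]
variable [AddCommGroup E'] [Module F E'] [AddCommGroup D] [Module F D]
variable [LieRing L] [LieAlgebra F L]

/-- The associative product `a a' = ½(a ∘ a') + ½[a, a']` on `A`. -/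
def mulA (S : CoordSetup F n A B B' C C' E E' D L) (a a' : A) : A :=
  (2⁻¹ : F) • S.circA a a' + (2⁻¹ : F) • S.brA a a'

/-- The algebra `Ã = A ⊕ A^op` (direct sum of ideals); the second component is the
opposite copy `A^op`, so `(a₁, b₁)(a₂, b₂) = (a₁a₂, b₂b₁)`. -/
def mulAtil (S : CoordSetup F n A B B' C C' E E' D L) (x y : A × A) : A × A :=
  (mulA S x.1 y.1, mulA S y.2 x.2)

/-- The exchange involution `σ(a + bᵗ) = b + aᵗ` of `Ã = A ⊕ A^op`. -/
def sigmaA : A × A → A × A := Prod.swap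

/-- The product of the algebra `𝒜 = A⁺ ⊕ A⁻` (the restriction of the product of `𝔞`,
with first coordinate in `A⁺` and second coordinate in `A⁻`). -/
def mulAcal (S : CoordSetup F n A B B' C C' E E' D L) (x y : A × A) : A × A :=
  ((2⁻¹ : F) • (S.circA x.1 y.1 + S.circA x.2 y.2 + S.brA x.1 y.2 + S.brA x.2 y.1),
   (2⁻¹ : F) • (S.brA x.1 y.1 + S.brA x.2 y.2 + S.circA x.1 y.2 + S.circA x.2 y.1))

/-- The involution `γ|_𝒜` of `𝒜 = A⁺ ⊕ A⁻`: `γ(a⁺) = a⁺`, `γ(a⁻) = -a⁻`. -/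
def gammaAcal : A × A → A × A := fun x => (x.1, -x.2)

/-- The map `φ : Ã → 𝒜`, `φ(a + aᵗ) = a⁺` and `φ(a - aᵗ) = a⁻`; in coordinates
`φ(a, b) = (½(a + b), ½(a - b))`. -/
def phiA (F : Type*) [Field F] {A : Type*} [AddCommGroup A] [Module F A] :
    A × A → A × A :=
  fun x => ((2⁻¹ : F) • (x.1 + x.2), (2⁻¹ : F) • (x.1 - x.2))

end Stmt14Defs

end WG

theorem TensorProduct.eq_zero_of_tmul_eq_zero {K V W : Type*} [Field K]
    [AddCommGroup V] [Module K V] [AddCommGroup W] [Module K W]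
    {v : V} (hv : v ≠ 0) {w : W} (h : v ⊗ₜ[K] w = 0) : w = 0 := by
  obtain ⟨f, hf⟩ := Module.Projective.exists_dual_eq_one K hv
  simpa [hf] using congrArg (TensorProduct.lid K W ∘ LinearMap.rTensor W f) h

namespace WG

open Matrix

theorem single_mem_slL {F : Type*} [Field F] {m : ℕ} {i j : Fin m} (hij : i ≠ j) :
    Matrix.single i j (1 : F) ∈ slL F m :=
  trace_single_eq_of_ne i j 1 hij

section SlIdentities

variable {F : Type*} [Field F] [CharZero F] {n : ℕ}

theorem circSl_comm (x y : slL F (n + 1)) : circSl x y = circSl y x :=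
  congrArg projSl (add_comm _ _)

theorem coe_projSl_of_trace_eq_zero {m : MatN F n} (hm : trace m = 0) :
    (projSl m : MatN F n) = m := by
  simp [projSl, hm]

theorem circSl_eq_lie_of_mul_eq_zero {x y : slL F (n + 1)}
    (hyx : (y : MatN F n) * (x : MatN F n) = 0)
    (hxy : trace ((x : MatN F n) * (y : MatN F n)) = 0) :
    circSl x y = ⁅x, y⁆ := by
  apply Subtype.ext
  rw [circSl, hyx, add_zero, coe_projSl_of_trace_eq_zero hxy, LieSubalgebra.coe_bracket,
    Ring.lie_def, hyx, sub_zero]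

end SlIdentities

namespace CoordSetup

open TensorProduct

variable {F : Type*} [Field F] [CharZero F] {n : ℕ}
variable {A B B' C C' E E' D L : Type*}
variable [AddCommGroup A] [Module F A] [AddCommGroup B] [Module F B]
variable [AddCommGroup B'] [Module F B'] [AddCommGroup C] [Module F C]
variable [AddCommGroup C'] [Module F C'] [AddCommGroup E] [Module F E]
variable [AddCommGroup E'] [Module F E'] [AddCommGroup D] [Module F D]
variable [LieRing L] [LieAlgebra F L]
variable (S : CoordSetup F n A B B' C C' E E' D L)

theorem eq_zero_of_ιg_eq_zero {x : slL F (n + 1)} (hx : x ≠ 0) {a : A}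
    (h : S.ιg x a = 0) : a = 0 := by
  have htotal : totalMap S.ιg S.ιV S.ιV' S.ιS S.ιS' S.ιE S.ιE' S.ιD
      (x ⊗ₜ[F] a, 0, 0, 0, 0, 0, 0, 0) = 0 := by
    simp [totalMap, h]
  have hzero := S.bij.1 (htotal.trans (map_zero _).symm)
  exact eq_zero_of_tmul_eq_zero hx (congrArg Prod.fst hzero)

theorem ιg_lie_apply_brA_add_circA_eq_zero {x y : slL F (n + 1)}
    (hyx : (y : MatN F n) * (x : MatN F n) = 0)
    (hxy : trace ((x : MatN F n) * (y : MatN F n)) = 0) (a₁ a₂ : A) :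
    S.ιg ⁅x, y⁆ (S.brA a₁ a₂ + S.brA a₂ a₁ + S.circA a₁ a₂ - S.circA a₂ a₁) = 0 := by
  have hcirc := circSl_eq_lie_of_mul_eq_zero hyx hxy
  have htr : traceF (x : MatN F n) (y : MatN F n) = 0 := by rw [traceF, hxy, zero_div]
  have htr' : traceF (y : MatN F n) (x : MatN F n) = 0 := by
    rw [traceF, trace_mul_comm, hxy, zero_div]
  have hskew := lie_skew (S.ιg y a₂) (S.ιg x a₁)
  rw [S.rel_gg, S.rel_gg, circSl_comm y, hcirc, htr, htr', ← lie_skew y x] at hskew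
  simp only [zero_smul, map_zero, add_zero, map_neg, LinearMap.neg_apply, map_smul] at hskew
  simp only [map_add, map_sub]
  linear_combination (norm := module) (-2 : F) • hskew

theorem brA_add_brA_swap (hn : 2 ≤ n) (a₁ a₂ : A) :
    S.brA a₁ a₂ + S.brA a₂ a₁ = S.circA a₂ a₁ - S.circA a₁ a₂ := by
  let i : Fin (n + 1) := ⟨0, by omega⟩
  let j : Fin (n + 1) := ⟨1, by omega⟩
  let k : Fin (n + 1) := ⟨2, by omega⟩
  have hij : i ≠ j := by simp [i, j, Fin.ext_iff]
  have hjk : j ≠ k := by simp [j, k, Fin.ext_iff]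
  have hik : i ≠ k := by simp [i, k, Fin.ext_iff]
  let x : slL F (n + 1) := ⟨single i j 1, single_mem_slL hij⟩
  let y : slL F (n + 1) := ⟨single j k 1, single_mem_slL hjk⟩
  have hxy : (x : MatN F n) * (y : MatN F n) = single i k 1 := by simp [x, y]
  have hyx : (y : MatN F n) * (x : MatN F n) = 0 :=
    single_mul_single_of_ne (c := 1) j k i hik.symm 1
  have hlie : ((⁅x, y⁆ : slL F (n + 1)) : MatN F n) = single i k 1 := by
    rw [LieSubalgebra.coe_bracket, Ring.lie_def, hxy, hyx, sub_zero]
  have hne : ⁅x, y⁆ ≠ 0 := fun h => by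
    simpa [h] using congrFun (congrFun hlie i) k
  have htr : trace ((x : MatN F n) * (y : MatN F n)) = 0 := by
    rw [hxy]
    exact trace_single_eq_of_ne i k 1 hik
  have h := S.eq_zero_of_ιg_eq_zero hne (S.ιg_lie_apply_brA_add_circA_eq_zero hyx htr a₁ a₂)
  linear_combination (norm := module) h

theorem circA_comm (hn : 2 ≤ n) (a₁ a₂ : A) : S.circA a₁ a₂ = S.circA a₂ a₁ := by
  have h := S.brA_add_brA_swap hn a₁ a₂
  have h' := S.brA_add_brA_swap hn a₂ a₁
  have h2 : (2 : F) • (S.circA a₁ a₂ - S.circA a₂ a₁) = 0 := by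
    linear_combination (norm := module) h - h'
  exact sub_eq_zero.mp ((smul_eq_zero.mp h2).resolve_left two_ne_zero)

theorem brA_swap (hn : 2 ≤ n) (a₁ a₂ : A) : S.brA a₂ a₁ = -S.brA a₁ a₂ := by
  have h := S.brA_add_brA_swap hn a₁ a₂
  rw [S.circA_comm hn a₂ a₁, sub_self] at h
  exact eq_neg_of_add_eq_zero_right h

theorem phiA_mulAtil (hn : 2 ≤ n) (x y : A × A) :
    phiA F (mulAtil S x y) = mulAcal S (phiA F x) (phiA F y) := by
  obtain ⟨a₁, b₁⟩ := x
  obtain ⟨a₂, b₂⟩ := y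
  simp only [phiA, mulAtil, mulA, mulAcal, S.circA_comm hn b₂ b₁, S.brA_swap hn b₁ b₂,
    map_add, map_sub, map_smul, LinearMap.add_apply, LinearMap.sub_apply,
    LinearMap.smul_apply]
  ext <;> module

end CoordSetup

section Phi

variable {F : Type*} [Field F] [CharZero F] {A : Type*} [AddCommGroup A] [Module F A]

theorem phiA_bijective : Function.Bijective (phiA F (A := A)) := by
  refine Function.bijective_iff_has_inverse.2 ⟨fun y => (y.1 + y.2, y.1 - y.2), ?_, ?_⟩ <;>
    intro x <;> ext <;> simp only [phiA] <;> module

theorem phiA_sigmaA (x : A × A) : phiA F (sigmaA x) = gammaAcal (phiA F x) := by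
  ext <;> simp only [phiA, sigmaA, gammaAcal, Prod.fst_swap, Prod.snd_swap] <;> module

theorem phiA_mk_self (a : A) : phiA F (a, a) = (a, 0) := by
  simp only [phiA, sub_self, smul_zero, Prod.mk.injEq, and_true]
  module

end Phi

end WG

/-- Under the stated coordinate setup, let `A` carry the associative
product `a a' = ½(a∘a') + ½[a,a']` with unit `1`, let `A^op` be its opposite algebra and
let `Ã = A ⊕ A^op` (direct sum of ideals) carry the exchange involution
`σ(a + bᵗ) = b + aᵗ`.  Then the map `φ : Ã → 𝒜 = A⁻ ⊕ A⁺` defined by `φ(a + aᵗ) = a⁺`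
and `φ(a - aᵗ) = a⁻` is an isomorphism of algebras with involution, where `𝒜` carries
the involution `γ|_𝒜`; in particular `𝒜 ≅ A ⊕ A^op` as algebras with involution. -/
theorem stmt14 {F : Type*} [Field F] [CharZero F] (n : ℕ) (hn : 4 ≤ n)
    {A B B' C C' E E' D L : Type*}
    [AddCommGroup A] [Module F A] [AddCommGroup B] [Module F B]
    [AddCommGroup B'] [Module F B'] [AddCommGroup C] [Module F C]
    [AddCommGroup C'] [Module F C'] [AddCommGroup E] [Module F E]
    [AddCommGroup E'] [Module F E'] [AddCommGroup D] [Module F D]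
    [LieRing L] [LieAlgebra F L]
    (S : WG.CoordSetup F n A B B' C C' E E' D L) :
    Function.Bijective (WG.phiA F (A := A)) ∧
    (∀ x y : A × A, WG.phiA F (WG.mulAtil S x y) =
      WG.mulAcal S (WG.phiA F x) (WG.phiA F y)) ∧
    (∀ x : A × A, WG.phiA F (WG.sigmaA x) = WG.gammaAcal (WG.phiA F x)) ∧
    WG.phiA F (S.one, S.one) = (S.one, 0) :=
  ⟨WG.phiA_bijective, S.phiA_mulAtil (by omega), WG.phiA_sigmaA, WG.phiA_mk_self S.one⟩
end

section
/- Under the stated coordinate setup, the linear transformation γ : 𝔞 → 𝔞 defined by γ(a⁺) = a⁺, γ(a⁻) = −a⁻, γ(c) = −c, γ(e) = e, γ(c') = −c', γ(e') = e' (for a⁺ ∈ A⁺, a⁻ ∈ A⁻, c ∈ C, e ∈ E, c' ∈ C', e' ∈ E') is an antiautomorphism of order 2 of the associative algebra 𝔞, i.e. γ(xy) = γ(y)γ(x) for all x, y ∈ 𝔞 and γ² = id. -/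
attribute [local instance 100] LieRing.ofAssociativeRing

/-! On each of the six components of `𝔞`, `γ(xy)` and `γ(y)γ(x)` agree term by term once
`[·,·]_A` is skew and `∘_A` is symmetric. Both facts come from the skew-symmetry of the bracket of
`L` on `𝔤 ⊗ A`, evaluated at `x, y ∈ sl_{n+1}` with `yx = 0` and `xy ≠ 0` (e.g. `x = E₀₁`,
`y = E₁₂`, which needs `n ≥ 2`): then `x ∘ y = y ∘ x = [x, y]` and `(x | y) = 0`, so by (5.1)
`⁅x ⊗ a₁, y ⊗ a₂⁆ + ⁅y ⊗ a₂, x ⊗ a₁⁆ = 0` reads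
`[x, y] ⊗ ½([a₁, a₂] + [a₂, a₁] + a₁ ∘ a₂ - a₂ ∘ a₁) = 0`. Exchanging `a₁` and `a₂` separates
the two summands. -/

namespace WG

open scoped TensorProduct

theorem eq_zero_of_tmul_eq_zero {K V W : Type*} [Field K] [AddCommGroup V] [Module K V]
    [AddCommGroup W] [Module K W] {v : V} {w : W} (hv : v ≠ 0) (h : v ⊗ₜ[K] w = 0) :
    w = 0 := by
  obtain ⟨f, hf⟩ := Module.Projective.exists_dual_ne_zero K hv
  have hfw : f v • w = 0 := by
    simpa using congrArg (TensorProduct.lid K W ∘ LinearMap.rTensor W f) h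
  exact (smul_eq_zero.mp hfw).resolve_left hf

theorem exists_mul_eq_zero_lie_ne_zero (F : Type*) [Field F] {m : ℕ} (hm : 3 ≤ m) :
    ∃ x y : slL F m, (y : Matrix (Fin m) (Fin m) F) * x = 0 ∧ ⁅x, y⁆ ≠ 0 := by
  obtain ⟨k, rfl⟩ : ∃ k, m = k + 3 := ⟨m - 3, by omega⟩
  have h01 : (0 : Fin (k + 3)) ≠ 1 := by simp
  have h12 : (1 : Fin (k + 3)) ≠ 2 := by
    simp [Fin.ext_iff, Nat.mod_eq_of_lt (show 2 < k + 3 by omega)]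
  have h20 : (2 : Fin (k + 3)) ≠ 0 := by
    simp [Fin.ext_iff, Nat.mod_eq_of_lt (show 2 < k + 3 by omega)]
  refine ⟨⟨Matrix.single 0 1 1, Matrix.trace_single_eq_of_ne _ _ _ h01⟩,
    ⟨Matrix.single 1 2 1, Matrix.trace_single_eq_of_ne _ _ _ h12⟩,
    Matrix.single_mul_single_of_ne (1 : F) 1 2 0 h20 1, fun h => ?_⟩
  have h02 :=
    congrArg (fun z : slL F (k + 3) => (z : Matrix (Fin (k + 3)) (Fin (k + 3)) F) 0 2) h
  simp [Ring.lie_def, h20] at h02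

namespace CoordSetup

variable {F : Type*} [Field F] [CharZero F] {n : ℕ}
variable {A B B' C C' E E' D L : Type*}
variable [AddCommGroup A] [Module F A] [AddCommGroup B] [Module F B]
variable [AddCommGroup B'] [Module F B'] [AddCommGroup C] [Module F C]
variable [AddCommGroup C'] [Module F C'] [AddCommGroup E] [Module F E]
variable [AddCommGroup E'] [Module F E'] [AddCommGroup D] [Module F D]
variable [LieRing L] [LieAlgebra F L]

theorem eq_zero_of_ιg_eq_zero_s15 (S : CoordSetup F n A B B' C C' E E' D L)
    {z : slL F (n + 1)} (hz : z ≠ 0) {a : A} (h : S.ιg z a = 0) : a = 0 := by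
  have h0 := S.bij.injective (a₁ := (z ⊗ₜ[F] a, 0)) (a₂ := 0) (by simpa [totalMap] using h)
  exact eq_zero_of_tmul_eq_zero hz (congrArg Prod.fst h0)

theorem brA_add_circA_eq_zero (S : CoordSetup F n A B B' C C' E E' D L)
    {x y : slL F (n + 1)} (hyx : (y : MatN F n) * x = 0) (hxy : ⁅x, y⁆ ≠ 0) (a₁ a₂ : A) :
    S.brA a₁ a₂ + S.brA a₂ a₁ + (S.circA a₁ a₂ - S.circA a₂ a₁) = 0 := by
  have htr : Matrix.trace ((x : MatN F n) * (y : MatN F n)) = 0 := by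
    rw [Matrix.trace_mul_comm, hyx, Matrix.trace_zero]
  have hlie : ((⁅x, y⁆ : slL F (n + 1)) : MatN F n) = (x : MatN F n) * (y : MatN F n) := by
    rw [LieSubalgebra.coe_bracket, Ring.lie_def, hyx, sub_zero]
  have hcirc : circSl x y = ⁅x, y⁆ := by
    ext1
    simp only [circSl, projSl, hyx, add_zero, htr, zero_div, zero_smul, sub_zero, hlie]
  have hcirc' : circSl y x = ⁅x, y⁆ := by
    ext1
    simp only [circSl, projSl, hyx, zero_add, htr, zero_div, zero_smul, sub_zero, hlie]
  have htrF : traceF (x : MatN F n) y = 0 := by rw [traceF, htr, zero_div]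
  have htrF' : traceF (y : MatN F n) x = 0 := by rw [traceF, hyx, Matrix.trace_zero, zero_div]
  have hskew : ⁅S.ιg x a₁, S.ιg y a₂⁆ + ⁅S.ιg y a₂, S.ιg x a₁⁆ = 0 := by
    rw [← lie_skew (S.ιg y a₂), add_neg_cancel]
  rw [S.rel_gg, S.rel_gg, hcirc, hcirc', htrF, htrF', ← lie_skew y x] at hskew
  have h := S.eq_zero_of_ιg_eq_zero_s15 hxy
    (a := (2⁻¹ : F) • (S.brA a₁ a₂ + S.brA a₂ a₁ + (S.circA a₁ a₂ - S.circA a₂ a₁))) (by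
      simp only [map_add, map_sub, map_smul, map_neg, LinearMap.neg_apply, zero_smul,
        map_zero, add_zero] at hskew ⊢
      linear_combination (norm := module) hskew)
  exact (smul_eq_zero.mp h).resolve_left (by norm_num)

theorem brA_skew (S : CoordSetup F n A B B' C C' E E' D L) (hn : 2 ≤ n) (a₁ a₂ : A) :
    S.brA a₁ a₂ = -S.brA a₂ a₁ := by
  obtain ⟨x, y, hyx, hxy⟩ := exists_mul_eq_zero_lie_ne_zero F (m := n + 1) (by omega)
  have h₁₂ := S.brA_add_circA_eq_zero hyx hxy a₁ a₂
  have h₂₁ := S.brA_add_circA_eq_zero hyx hxy a₂ a₁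
  linear_combination (norm := module) (2⁻¹ : F) • (h₁₂ + h₂₁)

theorem circA_comm_s15 (S : CoordSetup F n A B B' C C' E E' D L) (hn : 2 ≤ n) (a₁ a₂ : A) :
    S.circA a₁ a₂ = S.circA a₂ a₁ := by
  obtain ⟨x, y, hyx, hxy⟩ := exists_mul_eq_zero_lie_ne_zero F (m := n + 1) (by omega)
  have h₁₂ := S.brA_add_circA_eq_zero hyx hxy a₁ a₂
  have h₂₁ := S.brA_add_circA_eq_zero hyx hxy a₂ a₁
  linear_combination (norm := module) (2⁻¹ : F) • (h₁₂ - h₂₁)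

theorem gammaA_aMul (S : CoordSetup F n A B B' C C' E E' D L)
    (hbr : ∀ a₁ a₂ : A, S.brA a₁ a₂ = -S.brA a₂ a₁)
    (hcirc : ∀ a₁ a₂ : A, S.circA a₁ a₂ = S.circA a₂ a₁) (x y : CoorA A C E C' E') :
    gammaA (aMul S x y) = aMul S (gammaA y) (gammaA x) := by
  obtain ⟨a₁, a₁', c₁, e₁, c₁', e₁'⟩ := x
  obtain ⟨a₂, a₂', c₂, e₂, c₂', e₂'⟩ := y
  simp only [aMul, gammaA, map_neg, LinearMap.neg_apply, neg_neg, Prod.mk.injEq]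
  refine ⟨?_, ?_, by module, by module, by module, by module⟩
  · rw [hcirc a₁, hcirc a₁', hbr a₁, hbr a₁']
    module
  · rw [hcirc a₁, hcirc a₁', hbr a₁, hbr a₁']
    module

end CoordSetup

theorem gammaA_gammaA {A C E C' E' : Type*} [AddCommGroup A] [AddCommGroup C]
    [AddCommGroup E] [AddCommGroup C'] [AddCommGroup E'] (x : CoorA A C E C' E') :
    gammaA (gammaA x) = x := by
  obtain ⟨a, a', c, e, c', e'⟩ := x
  simp [gammaA]

end WG

/-- Under the stated coordinate setup, the linear transformation
`γ : 𝔞 → 𝔞` defined by `γ(a⁺) = a⁺`, `γ(a⁻) = -a⁻`, `γ(c) = -c`, `γ(e) = e`,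
`γ(c') = -c'`, `γ(e') = e'` is an antiautomorphism of order `2` of the associative
algebra `𝔞`. -/
theorem stmt15 {F : Type*} [Field F] [CharZero F] (n : ℕ) (hn : 4 ≤ n)
    {A B B' C C' E E' D L : Type*}
    [AddCommGroup A] [Module F A] [AddCommGroup B] [Module F B]
    [AddCommGroup B'] [Module F B'] [AddCommGroup C] [Module F C]
    [AddCommGroup C'] [Module F C'] [AddCommGroup E] [Module F E]
    [AddCommGroup E'] [Module F E'] [AddCommGroup D] [Module F D]
    [LieRing L] [LieAlgebra F L]
    (S : WG.CoordSetup F n A B B' C C' E E' D L) :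
    (∀ x y : WG.CoorA A C E C' E',
      WG.gammaA (WG.aMul S x y) = WG.aMul S (WG.gammaA y) (WG.gammaA x)) ∧
    (∀ x : WG.CoorA A C E C' E', WG.gammaA (WG.gammaA x) = x) :=
  ⟨S.gammaA_aMul (S.brA_skew (by omega)) (S.circA_comm_s15 (by omega)), WG.gammaA_gammaA⟩
end
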